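/- arXiv:1501.02071 — 2 statements merged into one kernel-verified Lean document; each statement's English description precedes it below -/
import Mathlib

section
/- If φ is an automorphism of a finite group G and N is a normal φ-invariant subgroup of G, then the order of the fixed-point subgroup of the induced automorphism of G/N is at most the order of C_G(φ); that is, |C_{G/N}(φ)| ≤ |C_G(φ)|. -/
theorem card_fixed_points_quotient_le (G : Type) [Group G] [Finite G] (φ : MulAut G)
    (N : Subgroup G) [N.Normal] (hinv : N.map φ.toMonoidHom = N) :
    Nat.card {x : G ⧸ N // ∃ g : G, QuotientGroup.mk g = x ∧ g⁻¹ * φ g ∈ N} ≤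
      Nat.card {g : G // φ g = g} := by
  classical
  have hφN : ∀ g : G, g ∈ N → φ g ∈ N := by
    intro g hg
    rw [← hinv]
    exact ⟨g, hg, rfl⟩
  set Q := {x : G ⧸ N // ∃ g : G, QuotientGroup.mk g = x ∧ g⁻¹ * φ g ∈ N} with hQ
  set S := {g : G // g⁻¹ * φ g ∈ N} with hS
  have hNpos : 0 < Nat.card ↥N := Nat.card_pos
  -- step 1 : |Q| * |N| ≤ |S|
  have h1 : Nat.card Q * Nat.card ↥N ≤ Nat.card S := by
    choose rep hrep1 hrep2 using fun x : Q => x.2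
    have hfmem : ∀ (x : Q) (n : ↥N), (rep x * (n : G))⁻¹ * φ (rep x * n) ∈ N := by
      intro x n
      have heq : (rep x * (n : G))⁻¹ * φ (rep x * (n : G)) =
          (n : G)⁻¹ * (((rep x)⁻¹ * φ (rep x)) * φ (n : G)) := by
        rw [map_mul]; group
      rw [heq]
      exact mul_mem (inv_mem n.2) (mul_mem (hrep2 x) (hφN _ n.2))
    let f : Q × ↥N → S := fun p => ⟨rep p.1 * (p.2 : G), hfmem p.1 p.2⟩
    have hinj : Function.Injective f := by
      intro p q h
      have hval : rep p.1 * (p.2 : G) = rep q.1 * (q.2 : G) := congrArg Subtype.val h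
      have hx : p.1 = q.1 := by
        apply Subtype.ext
        rw [← hrep1 p.1, ← hrep1 q.1]
        calc QuotientGroup.mk (rep p.1)
            = QuotientGroup.mk (rep p.1 * (p.2 : G)) :=
              (QuotientGroup.mk_mul_of_mem _ p.2.2).symm
          _ = QuotientGroup.mk (rep q.1 * (q.2 : G)) := by rw [hval]
          _ = QuotientGroup.mk (rep q.1) := QuotientGroup.mk_mul_of_mem _ q.2.2
      have hn : p.2 = q.2 := by
        apply Subtype.ext
        have : rep p.1 = rep q.1 := by rw [hx]
        rw [this] at hval
        exact mul_left_cancel hval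
      exact Prod.ext hx hn
    calc Nat.card Q * Nat.card ↥N = Nat.card (Q × ↥N) := (Nat.card_prod _ _).symm
      _ ≤ Nat.card S := Nat.card_le_card_of_injective f hinj
  -- step 2 : |S| ≤ |C| * |N|
  have h2 : Nat.card S ≤ Nat.card {g : G // φ g = g} * Nat.card ↥N := by
    let rep2 : G → G := fun v =>
      if h : ∃ t : S, ((t : G)⁻¹ * φ (t : G)) = v then ((Classical.choose h : S) : G) else 1
    have hspec : ∀ s : S,
        (rep2 ((s : G)⁻¹ * φ (s : G)))⁻¹ * φ (rep2 ((s : G)⁻¹ * φ (s : G))) =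
          (s : G)⁻¹ * φ (s : G) := by
      intro s
      have h : ∃ t : S, ((t : G)⁻¹ * φ (t : G)) = (s : G)⁻¹ * φ (s : G) := ⟨s, rfl⟩
      simp only [rep2, dif_pos h]
      exact Classical.choose_spec h
    have hfix : ∀ s : S,
        φ ((s : G) * (rep2 ((s : G)⁻¹ * φ (s : G)))⁻¹) =
          (s : G) * (rep2 ((s : G)⁻¹ * φ (s : G)))⁻¹ := by
      intro s
      set t := rep2 ((s : G)⁻¹ * φ (s : G)) with ht
      have h := hspec s
      rw [map_mul, map_inv]
      have hφs : φ (s : G) = (s : G) * (t⁻¹ * φ t) := by rw [h]; group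
      rw [hφs]; group
    let F : S → {g : G // φ g = g} × ↥N := fun s =>
      (⟨(s : G) * (rep2 ((s : G)⁻¹ * φ (s : G)))⁻¹, hfix s⟩,
       ⟨(s : G)⁻¹ * φ (s : G), s.2⟩)
    have hinj : Function.Injective F := by
      intro a b h
      have h2' : ((a : G)⁻¹ * φ (a : G)) = ((b : G)⁻¹ * φ (b : G)) :=
        congrArg Subtype.val (congrArg Prod.snd h)
      have h1' : (a : G) * (rep2 ((a : G)⁻¹ * φ (a : G)))⁻¹ =
          (b : G) * (rep2 ((b : G)⁻¹ * φ (b : G)))⁻¹ :=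
        congrArg Subtype.val (congrArg Prod.fst h)
      rw [h2'] at h1'
      exact Subtype.ext (mul_right_cancel h1')
    calc Nat.card S ≤ Nat.card ({g : G // φ g = g} × ↥N) :=
          Nat.card_le_card_of_injective F hinj
      _ = Nat.card {g : G // φ g = g} * Nat.card ↥N := Nat.card_prod _ _
  exact Nat.le_of_mul_le_mul_right (h1.trans h2) hNpos
end

section
/- Let p be a prime, n ≥ 1, let M be a finite abelian group acted on by automorphisms by a cyclic group ⟨φ⟩ of order p^n, let k be an algebraically closed field whose characteristic does not divide the order of the semidirect product M ⋊ ⟨φ⟩, and let U be an irreducible k[M ⋊ ⟨φ⟩]-module on which the subgroup [M, φ^{p^{n-1}}] acts non-trivially. Then U is a free k⟨φ⟩-module, i.e., a direct sum of copies of the group algebra k⟨φ⟩. -/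
/-- The subgroup `[M, ψ]` generated by all commutators `x⁻¹ · ψ(x)`. -/
def commutatorWithAut {M : Type*} [Group M] (ψ : MulAut M) : Subgroup M :=
  Subgroup.closure {y : M | ∃ x : M, y = x⁻¹ * ψ x}

/-!
Since `M` is abelian and `k` is algebraically closed, the finite-dimensional module `U` contains a
simultaneous eigenvector of `M`, with eigenvalue function `χ`. The element `φ ^ j` carries the
`χ`-eigenspace `U_χ` onto the eigenspace of `χ ∘ φ⁻ʲ`, and by irreducibility these translates span
`U`. If some `φ ^ j ≠ 1` fixed `χ`, so would the generator `φ ^ p ^ (n - 1)` of the smallest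
nontrivial subgroup of `⟨φ⟩`; then `[M, φ ^ p ^ (n - 1)]` would act trivially on every translate,
hence on `U`. So the functions `χ ∘ φ⁻ʲ` are pairwise distinct, their eigenspaces are independent,
`U = ⨁ⱼ φ ^ j U_χ`, and the `φ`-translates of a basis of `U_χ` form a basis of `U` freely permuted
by `φ`.
-/

open SemidirectProduct

universe u

namespace Module.End

variable {k V : Type*} [Field k] [IsAlgClosed k] [AddCommGroup V] [Module k V]
  [FiniteDimensional k V]

theorem exists_inf_eigenspace_ne_bot (f : End k V) {p : Submodule k V} (hp : p ≠ ⊥)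
    (hfp : ∀ x ∈ p, f x ∈ p) : ∃ μ, p ⊓ f.eigenspace μ ≠ ⊥ := by
  have : Nontrivial p := Submodule.nontrivial_iff_ne_bot.mpr hp
  obtain ⟨μ, hμ⟩ := exists_eigenvalue (f.restrict hfp)
  refine ⟨μ, fun h => hasEigenvalue_iff.mp hμ (eigenspace_restrict_eq_bot hfp ?_)⟩
  rwa [disjoint_iff, inf_comm]

theorem exists_iInf_eigenspace_ne_bot [Nontrivial V] {ι : Type*} [Finite ι] (f : ι → End k V)
    (hf : ∀ i j, Commute (f i) (f j)) : ∃ χ : ι → k, ⨅ i, (f i).eigenspace (χ i) ≠ ⊥ := by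
  classical
  have : Fintype ι := Fintype.ofFinite ι
  have key (s : Finset ι) : ∃ p : Submodule k V, p ≠ ⊥ ∧ (∀ i, ∀ x ∈ p, f i x ∈ p) ∧
      ∀ i ∈ s, ∃ μ, p ≤ (f i).eigenspace μ := by
    induction s using Finset.induction_on with
    | empty => exact ⟨⊤, top_ne_bot, by simp, by simp⟩
    | insert i s _ ih =>
      obtain ⟨p, hp, hpf, hps⟩ := ih
      obtain ⟨μ, hμ⟩ := (f i).exists_inf_eigenspace_ne_bot hp (hpf i)
      refine ⟨p ⊓ (f i).eigenspace μ, hμ,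
        fun j x hx => ⟨hpf j x hx.1, mapsTo_genEigenspace_of_comm (hf i j) μ 1 hx.2⟩, ?_⟩
      intro j hj
      rcases Finset.mem_insert.mp hj with rfl | hj
      · exact ⟨μ, inf_le_right⟩
      · obtain ⟨ν, hν⟩ := hps j hj
        exact ⟨ν, inf_le_left.trans hν⟩
  obtain ⟨p, hp, -, hpχ⟩ := key Finset.univ
  choose χ hχ using fun i => hpχ i (Finset.mem_univ i)
  exact ⟨χ, ne_bot_of_le_ne_bot hp (le_iInf hχ)⟩

end Module.End

theorem pow_prime_pow_pred_mem_zpowers {G : Type*} [Group G] {g h : G} {p n : ℕ} (hp : p.Prime)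
    (hg : orderOf g = p ^ n) (hh : h ∈ Subgroup.zpowers g) (h1 : h ≠ 1) :
    g ^ p ^ (n - 1) ∈ Subgroup.zpowers h := by
  obtain ⟨m, rfl⟩ := hh
  obtain ⟨s, hs, hgcd⟩ := (Nat.dvd_prime_pow hp).mp
    (Int.natCast_dvd_natCast.mp (Int.gcd_dvd_right m (p ^ n : ℕ)))
  have hsn : s ≠ n := by
    rintro rfl
    refine h1 (orderOf_dvd_iff_zpow_eq_one.mp ?_)
    rw [hg, ← hgcd]
    exact_mod_cast Int.gcd_dvd_left m _
  have hdvd : m.gcd (p ^ n : ℕ) ∣ p ^ (n - 1) := hgcd ▸ pow_dvd_pow p (by omega)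
  obtain ⟨a, b, hab⟩ := Int.gcd_dvd_iff.mp hdvd
  refine ⟨a, ?_⟩
  rw [← zpow_natCast, hab, zpow_add, zpow_mul, zpow_mul, ← hg, zpow_natCast, pow_orderOf_eq_one,
    one_zpow, mul_one]

theorem commutatorWithAut_le_ker {M H : Type*} [Group M] [MulOneClass H] {σ : MulAut M}
    (f : M →* H) (hf : ∀ x, f (σ x) = f x) : commutatorWithAut σ ≤ f.ker := by
  refine (Subgroup.closure_le _).mpr ?_
  rintro _ ⟨x, rfl⟩
  rw [SetLike.mem_coe, MonoidHom.mem_ker, map_mul, hf, ← map_mul, inv_mul_cancel, map_one]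

theorem apply_zpow_eq_of_apply_eq {M β : Type*} [Group M] {σ : MulAut M} {χ : M → β}
    (hσ : ∀ x, χ (σ x) = χ x) (j : ℤ) (x : M) : χ ((σ ^ j) x) = χ x := by
  induction j using Int.induction_on generalizing x with
  | zero => simp
  | succ j ih => rw [zpow_add_one, MulAut.mul_apply, ih, hσ]
  | pred j ih => rw [zpow_sub_one, MulAut.mul_apply, ih, ← hσ, MulAut.apply_inv_self]

namespace Representation

variable {k : Type*} {U : Type u} [Field k] [AddCommGroup U] [Module k U]

section Irreducible

variable {G : Type*} [Monoid G] (ρ : Representation k G U)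

theorem isIrreducible_of_forall_invariant (hU : ∃ u : U, u ≠ 0)
    (h : ∀ W : Submodule k U, (∀ g, ∀ u ∈ W, ρ g u ∈ W) → W = ⊥ ∨ W = ⊤) : ρ.IsIrreducible where
  exists_pair_ne := by
    obtain ⟨u, hu⟩ := hU
    refine ⟨⊥, ⊤, fun h => hu ?_⟩
    have h' : (⊥ : Submodule k U) = ⊤ := congrArg Subrepresentation.toSubmodule h
    exact (Submodule.mem_bot k).mp (h' ▸ Submodule.mem_top)
  eq_bot_or_eq_top σ := by
    rcases h σ.toSubmodule σ.apply_mem_toSubmodule with h | h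
    exacts [.inl (Subrepresentation.ext h), .inr (Subrepresentation.ext h)]

variable {ρ} in
theorem IsIrreducible.eq_top [ρ.IsIrreducible] {W : Submodule k U} (hW : W ≠ ⊥)
    (h : ∀ g, ∀ u ∈ W, ρ g u ∈ W) : W = ⊤ :=
  congrArg Subrepresentation.toSubmodule <|
    (eq_bot_or_eq_top (⟨W, h⟩ : Subrepresentation ρ)).resolve_left
      fun h => hW (congrArg Subrepresentation.toSubmodule h)

theorem nontrivial_of_isIrreducible [ρ.IsIrreducible] : Nontrivial U := by
  by_contra h
  rw [not_nontrivial_iff_subsingleton] at h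
  exact bot_ne_top (α := Subrepresentation ρ) (Subrepresentation.ext (Subsingleton.elim _ _))

theorem finiteDimensional_of_isIrreducible [ρ.IsIrreducible] [Finite G] :
    FiniteDimensional k U := by
  have := ρ.nontrivial_of_isIrreducible
  obtain ⟨u, hu⟩ := exists_ne (0 : U)
  set W := Submodule.span k (Set.range fun g => ρ g u)
  have hspan : W = ⊤ := by
    refine IsIrreducible.eq_top (ρ := ρ) (fun h => hu ?_) fun g v hv => ?_
    · rw [← Submodule.mem_bot k, ← h]
      exact Submodule.subset_span ⟨1, by simp⟩
    · suffices W ≤ W.comap (ρ g) from this hv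
      refine Submodule.span_le.mpr ?_
      rintro _ ⟨h, rfl⟩
      exact Submodule.subset_span ⟨g * h, by simp⟩
  exact ⟨hspan ▸ Submodule.fg_span (Set.finite_range _)⟩

end Irreducible

section Semidirect

variable {M N : Type*} [Group M] [Group N] {ψ : N →* MulAut M}
  (ρ : Representation k (M ⋊[ψ] N) U)

theorem inl_mul_inr (x : M) (n : N) :
    ρ (inl x) * ρ (inr n) = ρ (inr n) * ρ (inl (ψ n⁻¹ x)) := by
  rw [← map_mul, ← map_mul]
  congr 1
  ext <;> simp

def inlWeightSpace (χ : M → k) : Submodule k U :=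
  ⨅ x, Module.End.eigenspace (ρ (inl x)) (χ x)

theorem mem_inlWeightSpace {χ : M → k} {u : U} :
    u ∈ ρ.inlWeightSpace χ ↔ ∀ x, ρ (inl x) u = χ x • u := by
  simp [inlWeightSpace]

theorem map_inr_inlWeightSpace_le (χ : M → k) (n : N) :
    (ρ.inlWeightSpace χ).map (ρ (inr n)) ≤ ρ.inlWeightSpace fun x => χ (ψ n⁻¹ x) := by
  rintro _ ⟨u, hu, rfl⟩
  rw [SetLike.mem_coe, mem_inlWeightSpace] at hu
  rw [mem_inlWeightSpace]
  intro x
  rw [← Module.End.mul_apply, inl_mul_inr, Module.End.mul_apply, hu, map_smul]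

theorem map_inr_inlWeightSpace (χ : M → k) (n : N) :
    (ρ.inlWeightSpace χ).map (ρ (inr n)) = ρ.inlWeightSpace fun x => χ (ψ n⁻¹ x) := by
  refine le_antisymm (ρ.map_inr_inlWeightSpace_le χ n) fun u hu => ⟨ρ (inr n⁻¹) u, ?_, ?_⟩
  · simpa using ρ.map_inr_inlWeightSpace_le _ n⁻¹ ⟨u, hu, rfl⟩
  · simp [← Module.End.mul_apply, ← map_mul]

theorem iSup_inlWeightSpace_eq_top [ρ.IsIrreducible] {χ : M → k}
    (hχ : ρ.inlWeightSpace χ ≠ ⊥) :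
    ⨆ n, ρ.inlWeightSpace (fun x => χ (ψ n⁻¹ x)) = ⊤ := by
  set S := ⨆ n, ρ.inlWeightSpace (fun x => χ (ψ n⁻¹ x))
  have hinl (a : M) : S.map (ρ (inl a)) ≤ S := by
    rw [Submodule.map_iSup]
    refine iSup_mono fun n => Submodule.map_le_iff_le_comap.mpr fun u hu => ?_
    rw [Submodule.mem_comap, ρ.mem_inlWeightSpace.mp hu a]
    exact Submodule.smul_mem _ _ hu
  have hinr (b : N) : S.map (ρ (inr b)) ≤ S := by
    rw [Submodule.map_iSup]
    refine iSup_le fun n =>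
      le_of_eq_of_le (ρ.map_inr_inlWeightSpace _ b) (le_iSup_of_le (b * n) ?_)
    simp
  refine IsIrreducible.eq_top (ρ := ρ) (ne_bot_of_le_ne_bot hχ (le_iSup_of_le 1 (by simp)))
    fun g u hu => ?_
  rw [← inl_left_mul_inr_right g, map_mul, Module.End.mul_apply]
  exact hinl _ (Submodule.mem_map_of_mem (hinr _ (Submodule.mem_map_of_mem hu)))

theorem commutatorWithAut_le_ker_comp_inl [ρ.IsIrreducible] {χ : M → k}
    (hχ : ρ.inlWeightSpace χ ≠ ⊥) {σ : MulAut M} (hσ : ∀ n, Commute σ (ψ n))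
    (hσχ : ∀ x, χ (σ x) = χ x) : commutatorWithAut σ ≤ (ρ.comp inl).ker := by
  refine commutatorWithAut_le_ker _ fun x => LinearMap.ext fun u => ?_
  have hu : u ∈ ⨆ n, ρ.inlWeightSpace (fun x => χ (ψ n⁻¹ x)) :=
    ρ.iSup_inlWeightSpace_eq_top hχ ▸ Submodule.mem_top
  induction hu using Submodule.iSup_induction' with
  | mem n u hu =>
    rw [mem_inlWeightSpace] at hu
    simp only [MonoidHom.coe_comp, Function.comp_apply, hu]
    rw [← MulAut.mul_apply, ← (hσ n⁻¹).eq, MulAut.mul_apply, hσχ]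
  | zero => simp
  | add u v _ _ hu hv => rw [map_add, map_add, hu, hv]

end Semidirect

section AbelianSemidirect

variable {M N : Type*} [CommGroup M] [Group N] {ψ : N →* MulAut M}
  (ρ : Representation k (M ⋊[ψ] N) U)

theorem exists_inlWeightSpace_ne_bot [Finite M] [IsAlgClosed k] [FiniteDimensional k U]
    [Nontrivial U] : ∃ χ, ρ.inlWeightSpace χ ≠ ⊥ :=
  Module.End.exists_iInf_eigenspace_ne_bot (fun x => ρ (inl x))
    fun x y => ((Commute.all x y).map inl).map ρ

theorem iSupIndep_inlWeightSpace : iSupIndep ρ.inlWeightSpace :=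
  (Module.End.independent_iInf_maxGenEigenspace_of_forall_mapsTo (fun x => ρ (inl x))
    fun x y μ => Module.End.mapsTo_maxGenEigenspace_of_comm (((Commute.all y x).map inl).map ρ) μ
    ).mono fun _ => iInf_mono fun _ => Module.End.eigenspace_le_maxGenEigenspace

theorem isInternal_map_inr_inlWeightSpace [DecidableEq N] [ρ.IsIrreducible] {χ : M → k}
    (hχ : ρ.inlWeightSpace χ ≠ ⊥) (hstab : ∀ n, (∀ x, χ (ψ n x) = χ x) → n = 1) :
    DirectSum.IsInternal fun n => (ρ.inlWeightSpace χ).map (ρ (inr n)) := by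
  simp_rw [map_inr_inlWeightSpace]
  refine DirectSum.isInternal_submodule_of_iSupIndep_of_iSup_eq_top
    (ρ.iSupIndep_inlWeightSpace.comp fun a b hab => ?_) (ρ.iSup_inlWeightSpace_eq_top hχ)
  refine inv_mul_eq_one.mp (hstab _ fun x => ?_)
  simpa using congrFun hab (ψ b x)

end AbelianSemidirect

theorem exists_basis_mul_of_isInternal {N : Type*} [Group N] [DecidableEq N]
    (ρ : Representation k N U) {W : Submodule k U}
    (hW : DirectSum.IsInternal fun n => W.map (ρ n)) :
    ∃ (ι : Type u) (b : Module.Basis (ι × N) k U), ∀ i n n', ρ n (b (i, n')) = b (i, n * n') := by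
  let e := Module.Basis.ofVectorSpace k W
  let bases n := e.map <|
    W.equivMapOfInjective (ρ n) (Function.LeftInverse.injective (ρ.inv_self_apply n))
  refine ⟨_, (hW.collectedBasis bases).reindex
    ((Equiv.sigmaEquivProd _ _).trans (Equiv.prodComm _ _)), fun i n n' => ?_⟩
  simp [bases, hW.collectedBasis_coe]

theorem exists_basis_zmod_orderOf {G ι : Type*} [Group G] {g : G}
    (ρ : Representation k (Subgroup.zpowers g) U) (b : Module.Basis (ι × Subgroup.zpowers g) k U)
    (hb : ∀ i n n', ρ n (b (i, n')) = b (i, n * n')) :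
    ∃ b' : Module.Basis (ι × ZMod (orderOf g)) k U,
      ∀ i j, ρ ⟨g, Subgroup.mem_zpowers g⟩ (b' (i, j)) = b' (i, j + 1) := by
  have hg (x : Subgroup.zpowers g) : x ∈ Subgroup.zpowers ⟨g, Subgroup.mem_zpowers g⟩ := by
    obtain ⟨j, hj⟩ := Subgroup.mem_zpowers_iff.mp x.2
    exact ⟨j, Subtype.ext hj⟩
  let f := zmodMulEquivOfGenerator hg (Nat.card_zpowers g)
  refine ⟨b.reindex (Equiv.prodCongr (.refl ι) f.symm.toEquiv), fun i j => ?_⟩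
  have hf : f (.ofAdd (j + 1)) = ⟨g, Subgroup.mem_zpowers g⟩ * f (.ofAdd j) := by
    rw [add_comm, ofAdd_add, map_mul, zmodMulEquivOfGenerator_apply_ofAdd_one]
  rw [Module.Basis.reindex_apply, Module.Basis.reindex_apply]
  change ρ _ (b (i, f (.ofAdd j))) = b (i, f (.ofAdd (j + 1)))
  rw [hb, hf]

end Representation

theorem irreducible_module_is_free_over_cyclic_group :
    ∀ (p n : ℕ), p.Prime → 1 ≤ n →
      ∀ (M : Type) [CommGroup M] [Finite M],
        ∀ φ : MulAut M, orderOf φ = p ^ n →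
          ∀ (k : Type) [Field k] [IsAlgClosed k],
            -- the characteristic of `k` does not divide the order of `M ⋊ ⟨φ⟩`
            ¬ (ringChar k ∣
                Nat.card (M ⋊[(Subgroup.zpowers φ).subtype] ↥(Subgroup.zpowers φ))) →
            ∀ (U : Type) [AddCommGroup U] [Module k U],
              ∀ ρ : Representation k
                  (M ⋊[(Subgroup.zpowers φ).subtype] ↥(Subgroup.zpowers φ)) U,
                -- `U` is irreducible
                (∃ u : U, u ≠ 0) →
                (∀ W : Submodule k U,
                  (∀ (h : M ⋊[(Subgroup.zpowers φ).subtype] ↥(Subgroup.zpowers φ)),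
                    ∀ u ∈ W, ρ h u ∈ W) → W = ⊥ ∨ W = ⊤) →
                -- `[M, φ^{p^{n-1}}]` acts non-trivially on `U`
                (∃ x ∈ commutatorWithAut (φ ^ p ^ (n - 1)), ∃ u : U,
                    ρ (SemidirectProduct.inl x) u ≠ u) →
                -- `U` is a free `k⟨φ⟩`-module: it has a `k`-basis permuted by `φ`
                -- with all orbits regular
                ∃ (ι : Type) (b : Module.Basis (ι × ZMod (p ^ n)) k U),
                  ∀ (i : ι) (j : ZMod (p ^ n)),
                    ρ (SemidirectProduct.inr ⟨φ, Subgroup.mem_zpowers φ⟩) (b (i, j)) =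
                      b (i, j + 1) := by
  classical
  intro p n hp _ M _ _ φ hφ k _ _ _ U _ _ ρ hU hirr ⟨z, hz, u, hzu⟩
  have := ρ.isIrreducible_of_forall_invariant hU hirr
  have : Finite (Subgroup.zpowers φ) :=
    (orderOf_pos_iff.mp (hφ ▸ pow_pos hp.pos n)).finite_zpowers
  have : Finite (M ⋊[(Subgroup.zpowers φ).subtype] Subgroup.zpowers φ) :=
    Finite.of_equiv _ equivProd.symm
  have := ρ.finiteDimensional_of_isIrreducible
  have := ρ.nontrivial_of_isIrreducible
  obtain ⟨χ, hχ⟩ := ρ.exists_inlWeightSpace_ne_bot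
  have hstab (m : Subgroup.zpowers φ) (hm : ∀ x, χ (m.1 x) = χ x) : m = 1 := by
    by_contra hm1
    obtain ⟨j, hj⟩ := Subgroup.mem_zpowers_iff.mp
      (pow_prime_pow_pred_mem_zpowers hp hφ m.2 (by simpa using hm1))
    have hcomm (m' : Subgroup.zpowers φ) : Commute (φ ^ p ^ (n - 1)) m' := by
      obtain ⟨j', hj'⟩ := Subgroup.mem_zpowers_iff.mp m'.2
      exact hj' ▸ ((Commute.refl φ).pow_left _).zpow_right j'
    have hker := ρ.commutatorWithAut_le_ker_comp_inl hχ hcomm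
      (hj ▸ apply_zpow_eq_of_apply_eq hm j) hz
    exact hzu (LinearMap.congr_fun (MonoidHom.mem_ker.mp hker) u)
  obtain ⟨ι, b, hb⟩ := Representation.exists_basis_mul_of_isInternal (ρ.comp inr)
    (ρ.isInternal_map_inr_inlWeightSpace hχ hstab)
  obtain ⟨b', hb'⟩ := Representation.exists_basis_zmod_orderOf _ b hb
  rw [← hφ]
  exact ⟨ι, b', hb'⟩
end
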